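/- arXiv:1902.08725 — 11 statements merged into one kernel-verified Lean document; each statement's English description precedes it below -/
import Mathlib

section
/- Let G be a group, let λ : G →* Equiv.Perm G be the left regular representation (λ(g) is the permutation x ↦ g * x), let L be the range of λ, and let N be the normalizer of L in Equiv.Perm G. Then there exists a surjective group homomorphism R : N →* MulAut G such that for every φ ∈ N and every g ∈ G one has λ(R(φ)(g)) = φ * λ(g) * φ⁻¹, and moreover for every u ∈ G, R(λ(u)) is the inner automorphism given by conjugation by u (so R maps L onto the group of inner automorphisms of G). -/
/-!
The normalizer of `L = λ(G)` acts on `L` by conjugation, and `λ : G ≃* L` transports this action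
to `G`; this works for any injective homomorphism in place of `λ`. Surjectivity is special to the
regular representation: an automorphism `α` of `G`, viewed as a permutation of `G`, conjugates
`λ g` to `λ (α g)`, so it normalizes `L` and is sent to `α`.
-/

open Subgroup

namespace MonoidHom

variable {G H : Type*} [Group G] [Group H] {f : G →* H}

noncomputable def normalizerRangeToMulAut (hf : Function.Injective f) :
    normalizer (f.range : Set H) →* MulAut G :=
  (MulAut.congr (ofInjective hf).symm).toMonoidHom.comp f.range.normalizerMonoidHom

theorem apply_normalizerRangeToMulAut_apply (hf : Function.Injective f)
    (φ : normalizer (f.range : Set H)) (g : G) :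
    f (normalizerRangeToMulAut hf φ g) = φ * f g * (φ : H)⁻¹ :=
  apply_ofInjective_symm hf _

theorem normalizerRangeToMulAut_mk_self (hf : Function.Injective f) (u : G)
    (hu : f u ∈ normalizer (f.range : Set H)) :
    normalizerRangeToMulAut hf ⟨f u, hu⟩ = MulAut.conj u := by
  ext g
  apply hf
  rw [apply_normalizerRangeToMulAut_apply, MulAut.conj_apply, map_mul, map_mul, map_inv]

end MonoidHom

namespace MulAut

variable {G : Type*} [Group G]

theorem conj_toPerm_toPermHom (α : MulAut G) (g : G) :
    conj (toPerm G α) (MulAction.toPermHom G G g) = MulAction.toPermHom G G (α g) := by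
  ext x
  change α (g * α.symm x) = α g * x
  simp

theorem toPerm_mem_normalizer_range_toPermHom (α : MulAut G) :
    toPerm G α ∈ normalizer ((MulAction.toPermHom G G).range : Set (Equiv.Perm G)) := by
  rw [mem_normalizer_iff_conj_image_eq, MonoidHom.coe_range, ← Set.range_comp]
  simp only [Function.comp_def, conj_toPerm_toPermHom]
  exact α.surjective.range_comp _

end MulAut

namespace MulAction

variable {G : Type*} [Group G]

theorem toPermHom_injective : Function.Injective (toPermHom G G) :=
  toPerm_injective

theorem normalizerRangeToMulAut_toPermHom_surjective :
    Function.Surjective (MonoidHom.normalizerRangeToMulAut (toPermHom_injective (G := G))) := by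
  intro α
  refine ⟨⟨MulAut.toPerm G α, α.toPerm_mem_normalizer_range_toPermHom⟩, ?_⟩
  ext g
  apply toPermHom_injective
  rw [MonoidHom.apply_normalizerRangeToMulAut_apply, ← α.conj_toPerm_toPermHom, MulAut.conj_apply]

end MulAction

/-- For a group `G` with left regular representation
`lam : G →* Equiv.Perm G`, `L = lam.range` and `N` the normalizer of `L` in
`Equiv.Perm G`, there is a surjective homomorphism `R : N →* MulAut G` with
`lam (R φ g) = φ * lam g * φ⁻¹`, and `R (lam u) = MulAut.conj u` for `u ∈ G`. -/
theorem stmt0 (G : Type*) [Group G] :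
    ∃ R : (Subgroup.normalizer ((MulAction.toPermHom G G).range : Set (Equiv.Perm G))) →* MulAut G,
      Function.Surjective R ∧
      (∀ (φ : Subgroup.normalizer ((MulAction.toPermHom G G).range : Set (Equiv.Perm G))) (g : G),
        MulAction.toPermHom G G (R φ g) =
          (φ : Equiv.Perm G) * MulAction.toPermHom G G g * (φ : Equiv.Perm G)⁻¹) ∧
      (∀ (u : G) (hu : MulAction.toPermHom G G u ∈ Subgroup.normalizer ((MulAction.toPermHom G G).range : Set (Equiv.Perm G))),
        R ⟨MulAction.toPermHom G G u, hu⟩ = MulAut.conj u) :=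
  ⟨_, MulAction.normalizerRangeToMulAut_toPermHom_surjective,
    MonoidHom.apply_normalizerRangeToMulAut_apply _,
    MonoidHom.normalizerRangeToMulAut_mk_self _⟩
end

section
/- Let G be a group acting faithfully on a set X, and suppose r : Fin n → X is a finite family such that every element of X lies in the G-orbit of r i for some i. For x ∈ X let k₂(x) denote the cardinality of the set of orbits of the diagonal action of G on X × X (g • (a,b) = (g • a, g • b)) that contain a pair whose first coordinate is x. Then the cardinality of the center of G is at most the product over i : Fin n of k₂(r i). -/
/-! The diagonal orbit of `(r i, z • r i)` determines `z • r i` for central `z`, since the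
stabiliser of `r i` commutes with `z`; a central element is then determined on the whole orbit
of `r i`, hence everywhere, hence by faithfulness. So `z ↦ (⟦(r i, z • r i)⟧)ᵢ` is injective. -/

open MulAction

section CenterOrbits

variable {G X : Type*} [Group G] [MulAction G X]

theorem smul_eq_smul_of_mem_orbit_of_mem_center {z w : G} (hz : z ∈ Subgroup.center G)
    (hw : w ∈ Subgroup.center G) {a x : X} (ha : z • a = w • a) (hx : x ∈ orbit G a) :
    z • x = w • x := by
  obtain ⟨c, rfl⟩ := hx
  calc z • (c : G) • a = (c : G) • z • a := by
        rw [smul_smul, smul_smul, Subgroup.mem_center_iff.mp hz]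
    _ = (c : G) • w • a := by rw [ha]
    _ = w • (c : G) • a := by
        rw [smul_smul, smul_smul, Subgroup.mem_center_iff.mp hw]

theorem smul_eq_smul_of_orbitRel_prod {z w : G} (hw : w ∈ Subgroup.center G) {a : X}
    (h : orbitRel G (X × X) (a, z • a) (a, w • a)) : z • a = w • a := by
  obtain ⟨k, hk⟩ := h
  obtain ⟨hka, hkwa⟩ := Prod.ext_iff.mp hk
  -- `k` fixes `a` and commutes with `w`, hence fixes `w • a`.
  simp only [Prod.smul_fst, Prod.smul_snd] at hka hkwa
  rw [← hkwa, smul_smul, Subgroup.mem_center_iff.mp hw, ← smul_smul, hka]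

theorem injective_center_to_orbitRel_prod [FaithfulSMul G X] {ι : Type*} (r : ι → X)
    (hr : ∀ x : X, ∃ i, x ∈ orbit G (r i)) :
    Function.Injective fun (z : Subgroup.center G) (i : ι) =>
      Quotient.mk (orbitRel G (X × X)) (r i, (z : G) • r i) := by
  intro z w h
  refine Subtype.ext (eq_of_smul_eq_smul (α := X) fun x => ?_)
  obtain ⟨i, hi⟩ := hr x
  have hri : (z : G) • r i = (w : G) • r i :=
    smul_eq_smul_of_orbitRel_prod w.2 (Quotient.exact (congrFun h i))
  exact smul_eq_smul_of_mem_orbit_of_mem_center z.2 w.2 hri hi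

end CenterOrbits

/-- If a group `G` acts faithfully on `X` and `r : Fin n → X`
meets every orbit, then the cardinality of the center of `G` is at most the
product over `i` of the number of orbits of the diagonal action on `X × X`
containing a pair with first coordinate `r i`. -/
theorem stmt1 {G X : Type u} [Group G] [MulAction G X] [FaithfulSMul G X]
    (n : ℕ) (r : Fin n → X) (hr : ∀ x : X, ∃ i, x ∈ MulAction.orbit G (r i)) :
    Cardinal.mk (Subgroup.center G) ≤
      ∏ i : Fin n,
        Cardinal.mk {q : Quotient (MulAction.orbitRel G (X × X)) |
          ∃ b : X, Quotient.mk (MulAction.orbitRel G (X × X)) (r i, b) = q} := by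
  calc Cardinal.mk (Subgroup.center G)
      ≤ Cardinal.mk (Π i : Fin n, {q : Quotient (MulAction.orbitRel G (X × X)) |
          ∃ b : X, Quotient.mk (MulAction.orbitRel G (X × X)) (r i, b) = q}) :=
        Cardinal.mk_le_of_injective (f := fun z i => ⟨_, (z : G) • r i, rfl⟩) fun z w h =>
          injective_center_to_orbitRel_prod r hr
            (funext fun i => congrArg Subtype.val (congrFun h i))
    _ = _ := by rw [Cardinal.mk_pi, Cardinal.prod_eq_of_fintype, Cardinal.lift_uzero]
end

section
/- Let G be a group acting faithfully on a set Y, and let C be the center of G. If g ∈ G is such that for every pair (w, w') ∈ Y × Y there exists c ∈ C with g • w = c • w and g • w' = c • w', then g ∈ C. Equivalently, the induced action of G/C on the quotient of Y × Y by the orbit equivalence relation of the diagonal action of C is faithful. -/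
/-! If `x • y` and `y` are both moved by `g` like by a central `c`, then
`x g y = x c y = c x y = g x y`; as `y` is arbitrary and the action is faithful, `x g = g x`. -/

theorem mul_smul_comm_of_smul_eq_smul {G Y : Type*} [Monoid G] [MulAction G Y]
    {g c x : G} {y : Y} (hxc : Commute x c) (hy : g • y = c • y)
    (hxy : g • x • y = c • x • y) : (x * g) • y = (g * x) • y := by
  rw [mul_smul, mul_smul, hy, hxy, ← mul_smul, ← mul_smul, hxc.eq]

/-- If a group `G` acts faithfully on `Y` and `g ∈ G` is such
that for every pair `(w, w')` there is a central element `c` with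
`g • w = c • w` and `g • w' = c • w'`, then `g` is central.  (This says that
the induced action of `G / Z(G)` on the quotient of `Y × Y` by the orbit
equivalence relation of the diagonal action of the center is faithful.) -/
theorem stmt3 {G Y : Type*} [Group G] [MulAction G Y] [FaithfulSMul G Y]
    (g : G)
    (h : ∀ w w' : Y, ∃ c ∈ Subgroup.center G, g • w = c • w ∧ g • w' = c • w') :
    g ∈ Subgroup.center G := by
  refine Subgroup.mem_center_iff.mpr fun x => eq_of_smul_eq_smul (α := Y) fun y => ?_
  obtain ⟨c, hc, hy, hxy⟩ := h y (x • y)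
  exact mul_smul_comm_of_smul_eq_smul (Subgroup.mem_center_iff.mp hc x) hy hxy
end

section
/- Let G be an oligomorphic subgroup of Equiv.Perm ℕ, let C be its center, and let ∼ denote the orbit equivalence relation on ℕ × ℕ of the diagonal action of C. Then G acts on the quotient set (ℕ × ℕ)/∼ by g • [p] = [g • p], the kernel of this action is exactly C, and for every n the induced diagonal action of G on n-tuples of elements of (ℕ × ℕ)/∼ has only finitely many orbits. -/
/-!
Since the center `C` is normal, `g • [p] = [g • p]` is a well-defined action on the `C`-orbits.
An element `g` fixing every class `[(a, h • a)]` agrees with some central `c` at `a` and at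
`h • a`, so `g (h a) = c (h a) = h (c a) = h (g a)`; by faithfulness `g` commutes with every `h`.
Finiteness of orbits on `n`-tuples of classes is inherited along the equivariant surjections
`ℕ^(2n) → (ℕ × ℕ)^n → ((ℕ × ℕ)/C)^n`.
-/

/-- A subgroup of `Equiv.Perm ℕ` is oligomorphic if for every `n ≥ 1` the
diagonal action on `n`-tuples has only finitely many orbits. -/
def IsOligomorphic (G : Subgroup (Equiv.Perm ℕ)) : Prop :=
  ∀ n : ℕ, 1 ≤ n → Finite (Quotient (MulAction.orbitRel G (Fin n → ℕ)))

open Function Subgroup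

namespace MulAction

variable {G α β : Type*} [Group G] [MulAction G α] [MulAction G β]

theorem smul_mem_orbit_smul_of_normal {N : Subgroup G} [N.Normal] (g : G) {a b : α}
    (h : a ∈ orbit N b) : g • a ∈ orbit N (g • b) := by
  obtain ⟨n, rfl⟩ := h
  refine ⟨⟨g * n * g⁻¹, ‹N.Normal›.conj_mem n n.2 g⟩, ?_⟩
  change (g * n * g⁻¹) • g • b = g • (n : G) • b
  rw [smul_smul, inv_mul_cancel_right, mul_smul]

instance quotientOrbitRelNormal (N : Subgroup G) [N.Normal] :
    MulAction G (orbitRel.Quotient N α) where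
  smul g := Quotient.map (g • ·) fun _ _ => smul_mem_orbit_smul_of_normal g
  one_smul := Quotient.ind fun a => congrArg _ (one_smul G a)
  mul_smul g h := Quotient.ind fun a => congrArg _ (mul_smul g h a)

theorem smul_mk_orbitRel (N : Subgroup G) [N.Normal] (g : G) (a : α) :
    g • Quotient.mk (orbitRel N α) a = Quotient.mk _ (g • a) :=
  rfl

theorem forall_smul_orbitRel_center_prod_eq_self_iff [FaithfulSMul G α] {g : G} :
    (∀ q : orbitRel.Quotient (center G) (α × α), g • q = q) ↔ g ∈ center G := by
  refine ⟨fun hg => mem_center_iff.mpr fun h => eq_of_smul_eq_smul (α := α) fun a => ?_,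
    fun hg => Quotient.ind fun a => Quotient.sound (mem_orbit a (⟨g, hg⟩ : center G))⟩
  obtain ⟨c, hc⟩ := Quotient.exact (hg (Quotient.mk _ (a, h • a)))
  have hca : (c : G) • a = g • a := congrArg Prod.fst hc
  have hcha : (c : G) • h • a = g • h • a := congrArg Prod.snd hc
  rw [mul_smul, mul_smul, ← hca, ← hcha, smul_smul, smul_smul, mem_center_iff.mp c.2 h]

theorem finite_orbitRel_quotient_of_surjective (f : α → β) (hf : ∀ (g : G) a, f (g • a) = g • f a)
    (hsurj : Surjective f) [Finite (orbitRel.Quotient G α)] :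
    Finite (orbitRel.Quotient G β) :=
  .of_surjective _ <| Quotient.map_surjective (sa := orbitRel G α) (sb := orbitRel G β)
    (fun _ b ⟨g, hg⟩ => by rw [← hg, hf]; exact mem_orbit (f b) g) hsurj

theorem finite_orbitRel_quotient_pi_quotient {ι : Type*} (N : Subgroup G) [N.Normal]
    [Finite (orbitRel.Quotient G (ι → α))] :
    Finite (orbitRel.Quotient G (ι → orbitRel.Quotient N α)) :=
  finite_orbitRel_quotient_of_surjective (fun v i => Quotient.mk _ (v i)) (fun _ _ => rfl)
    fun t => ⟨fun i => (t i).out, funext fun _ => Quotient.out_eq _⟩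

theorem finite_range_orbit [Finite (orbitRel.Quotient G α)] :
    (Set.range (orbit G : α → Set α)).Finite :=
  (Set.finite_range orbitRel.Quotient.orbit).subset <| by
    rintro _ ⟨a, rfl⟩
    exact ⟨Quotient.mk _ a, rfl⟩

end MulAction

open MulAction

namespace IsOligomorphic

variable {G : Subgroup (Equiv.Perm ℕ)}

theorem finite_orbitRel_quotient (hG : IsOligomorphic G) (n : ℕ) :
    Finite (orbitRel.Quotient G (Fin n → ℕ)) := by
  rcases n with _ | n
  · infer_instance
  · exact hG _ n.succ_pos

theorem finite_orbitRel_quotient_prod (hG : IsOligomorphic G) (n : ℕ) :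
    Finite (orbitRel.Quotient G (Fin n → ℕ × ℕ)) :=
  have := hG.finite_orbitRel_quotient (n + n)
  finite_orbitRel_quotient_of_surjective (fun u i => (u (Fin.castAdd n i), u (Fin.natAdd n i)))
    (fun _ _ => rfl) fun v => ⟨Fin.append (Prod.fst ∘ v) (Prod.snd ∘ v), funext fun _ => by
      simp only [Fin.append_left, Fin.append_right, comp_apply]⟩

end IsOligomorphic

/-- Let `G` be oligomorphic, `C` its center, and `∼` the orbit
equivalence relation on `ℕ × ℕ` of the diagonal action of `C`.  Then `G`
acts on `(ℕ × ℕ)/∼` by `g • [p] = [g • p]`, the kernel of this action is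
exactly `C`, and for each `n` the diagonal action of `G` on `n`-tuples of
elements of `(ℕ × ℕ)/∼` has only finitely many orbits. -/
theorem stmt4 (G : Subgroup (Equiv.Perm ℕ)) (holig : IsOligomorphic G) :
    ∃ sm : G → Quotient (MulAction.orbitRel (Subgroup.center G) (ℕ × ℕ)) →
            Quotient (MulAction.orbitRel (Subgroup.center G) (ℕ × ℕ)),
      (∀ (g : G) (p : ℕ × ℕ),
          sm g (Quotient.mk (MulAction.orbitRel (Subgroup.center G) (ℕ × ℕ)) p) =
            Quotient.mk (MulAction.orbitRel (Subgroup.center G) (ℕ × ℕ)) (g • p)) ∧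
      (∀ g h : G, ∀ q, sm (g * h) q = sm g (sm h q)) ∧
      (∀ g : G, (∀ q, sm g q = q) ↔ g ∈ Subgroup.center G) ∧
      (∀ n : ℕ,
        {S : Set (Fin n → Quotient (MulAction.orbitRel (Subgroup.center G) (ℕ × ℕ))) |
          ∃ t : Fin n → Quotient (MulAction.orbitRel (Subgroup.center G) (ℕ × ℕ)),
            S = {s | ∃ g : G, (fun i => sm g (t i)) = s}}.Finite) := by
  refine ⟨(· • ·), smul_mk_orbitRel _, mul_smul,
    fun _ => forall_smul_orbitRel_center_prod_eq_self_iff, fun n => ?_⟩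
  have := holig.finite_orbitRel_quotient_prod n
  have := finite_orbitRel_quotient_pi_quotient (G := G) (α := ℕ × ℕ) (ι := Fin n) (center G)
  exact (finite_range_orbit (G := G)).subset fun _ ⟨t, ht⟩ => ⟨t, ht.symm⟩
end

section
/- Let G be an oligomorphic subgroup of Equiv.Perm ℕ. Then the center of G is finite. -/
/-!
A central element `z` is determined by the set of orbits of the pairs `(x, z • x)`: if
`(x, z • x)` and `(y, w • y)` lie in one orbit, say `g • y = x`, then, `w` being central,
`w • x = g • w • y = z • x`. For a faithful action this embeds the center into the power
set of the (finite) set of orbits on pairs.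
-/

open MulAction

section

variable {G α : Type*} [Group G] [MulAction G α]

def graphOrbits (z : G) : Set (Quotient (orbitRel G (Fin 2 → α))) :=
  Set.range fun x => ⟦![x, z • x]⟧

theorem smul_eq_of_graphOrbits_eq {z w : G} (hw : w ∈ Subgroup.center G)
    (h : graphOrbits (α := α) z = graphOrbits w) (x : α) : z • x = w • x := by
  obtain ⟨y, hy⟩ : ⟦![x, z • x]⟧ ∈ graphOrbits (α := α) w := h ▸ ⟨x, rfl⟩
  obtain ⟨g, hg⟩ := Quotient.exact hy.symm
  have hgy : g • y = x := by simpa using congrFun hg 0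
  have hgwy : g • w • y = z • x := by simpa using congrFun hg 1
  rw [← hgwy, ← hgy, smul_smul, smul_smul, Subgroup.mem_center_iff.mp hw g]

theorem finite_center_of_finite_orbitRel_pairs [FaithfulSMul G α]
    [Finite (Quotient (orbitRel G (Fin 2 → α)))] : Finite (Subgroup.center G) :=
  Finite.of_injective (fun z : Subgroup.center G => graphOrbits (α := α) (z : G))
    fun _ w h => Subtype.ext <| eq_of_smul_eq_smul (α := α) (smul_eq_of_graphOrbits_eq w.2 h)

end

/-- The center of an oligomorphic subgroup of `Equiv.Perm ℕ`
is finite. -/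
theorem stmt5 (G : Subgroup (Equiv.Perm ℕ)) (holig : IsOligomorphic G) :
    Finite (Subgroup.center G) :=
  have : Finite (Quotient (orbitRel G (Fin 2 → ℕ))) := holig 2 one_le_two
  finite_center_of_finite_orbitRel_pairs (α := ℕ)
end

section
/- Let G be a closed oligomorphic subgroup of Equiv.Perm ℕ. Then the upper central series of G stabilizes at a finite stage: there exists n such that the (n+1)-st term of the upper central series of G equals the n-th term. -/
/-- A subgroup of `Equiv.Perm ℕ` is closed (for pointwise convergence) if
every permutation approximated on arbitrarily long initial segments by
elements of `G` belongs to `G`. -/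
def IsClosedSubgroup (G : Subgroup (Equiv.Perm ℕ)) : Prop :=
  ∀ σ : Equiv.Perm ℕ, (∀ n : ℕ, ∃ g ∈ G, ∀ i < n, σ i = g i) → σ ∈ G

/-!
Let `acl a` (`algClosure`) be the set of points with a finite orbit under the stabilizer of `a`;
oligomorphicity makes `acl a` finite. Write `Z n` for the upper central series.

Every element of `Z n` maps each point `a` into `acl a` (induction on `n`, since `⁅z, g⁆ ∈ Z n`
for `z ∈ Z (n + 1)`). Every `Z n` is finite: if a finite set `W` of points separates the elements
of `Z n`, then `Z (n + 1)` commutes with the pointwise stabilizer `H` of `acl W`, because its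
commutators with `H` lie in `Z n` and fix `W`. An element commuting with `H` is determined by its
values on representatives of the finitely many `H`-orbits, and it moves each of them inside a
finite set.

Having the same stabilizer in `Z n` is an invariant relation on pairs of points which shrinks as
`n` grows, so it is constant from some `n₀` on. A finite set meeting every class of this relation
for `Z n₀` then separates every `Z n` with `n ≥ n₀`, which bounds `|Z n|` uniformly, and the
increasing chain of the finite groups `Z n` has to stop.
-/

open MulAction Set

section

variable {Γ X : Type*} [Group Γ] [MulAction Γ X]

variable (Γ X) in
def IsOligomorphicAction : Prop :=
  ∀ n, Finite (orbitRel.Quotient Γ (Fin n → X))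

variable (Γ) in
def algClosure (a : X) : Set X :=
  {b | (orbit (stabilizer Γ a) b).Finite}

lemma self_mem_algClosure (a : X) : a ∈ algClosure Γ a :=
  (finite_singleton a).subset <| by
    rintro _ ⟨⟨g, hg⟩, rfl⟩
    exact hg

lemma smul_finCons {m : ℕ} (g : Γ) (x : X) (e : Fin m → X) :
    g • (Fin.cons x e : Fin (m + 1) → X) = Fin.cons (g • x) (g • e) := by
  ext i
  refine Fin.cases ?_ (fun j => ?_) i <;> rfl

lemma orbitRel_finCons_iff {m : ℕ} (e : Fin m → X) (x y : X) :
    orbitRel Γ (Fin (m + 1) → X) (Fin.cons x e) (Fin.cons y e) ↔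
      orbitRel (stabilizer Γ e) X x y := by
  simp only [orbitRel_apply, mem_orbit_iff, smul_finCons, Fin.cons_inj, Subtype.exists,
    mem_stabilizer_iff, Subgroup.mk_smul, exists_prop]
  exact exists_congr fun g => and_comm

lemma MulAction.orbitRel.Quotient.finite_of_le {K L : Subgroup Γ} (hKL : K ≤ L)
    [Finite (orbitRel.Quotient K X)] : Finite (orbitRel.Quotient L X) :=
  Finite.of_surjective (Quotient.map' (s₁ := orbitRel K X) (s₂ := orbitRel L X) id
      fun _ _ ⟨k, hk⟩ => ⟨⟨k, hKL k.2⟩, hk⟩) <| by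
    rintro ⟨x⟩
    exact ⟨Quot.mk _ x, rfl⟩

lemma MulAction.finite_setOf_orbit_finite {K : Type*} [Group K] [MulAction K X]
    [Finite (orbitRel.Quotient K X)] : {b : X | (orbit K b).Finite}.Finite := by
  refine Finite.of_finite_fibers (Quotient.mk (orbitRel K X)) (toFinite _) ?_
  rintro _ ⟨b, hb, rfl⟩
  exact hb.subset fun c ⟨_, hc⟩ => Quotient.exact hc

lemma exists_finite_forall_smul_eq_self_imp_eq_one [FaithfulSMul Γ X] {S : Set Γ}
    (hS : S.Finite) :
    ∃ W : Set X, W.Finite ∧ ∀ w ∈ S, (∀ x ∈ W, w • x = x) → w = 1 := by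
  have hmoved : ∀ w : {w // w ∈ S ∧ w ≠ 1}, ∃ x : X, w.1 • x ≠ x := fun w => by
    by_contra! h
    exact w.2.2 (eq_of_smul_eq_smul (α := X) (by simpa using h))
  choose pt hpt using hmoved
  have : Finite {w // w ∈ S ∧ w ≠ 1} := (hS.subset fun _ h => h.1).to_subtype
  refine ⟨range pt, finite_range pt, fun w hw hfix => ?_⟩
  by_contra h1
  exact hpt ⟨w, hw, h1⟩ (hfix _ (mem_range_self _))

lemma smul_eq_self_of_forall_commute {H : Subgroup Γ} {z : Γ}
    (hcomm : ∀ h ∈ H, Commute z h)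
    (hfix : ∀ q : orbitRel.Quotient H X, z • q.out = q.out) (x : X) : z • x = x := by
  obtain ⟨⟨h, hh⟩, hx⟩ := Quotient.mk_out (s := orbitRel H X) x
  have hx : h • x = (Quotient.mk (orbitRel H X) x).out := hx
  rw [← smul_left_cancel_iff h, ← mul_smul, ← (hcomm h hh).eq, mul_smul, hx]
  exact hfix _

lemma Set.exists_succ_eq_of_monotone_of_encard_le {α : Type*} {s : ℕ → Set α}
    (hs : Monotone s) {N : ℕ} (hN : ∀ n, (s n).encard ≤ N) : ∃ n, s (n + 1) = s n := by
  by_contra! h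
  have hgrow : ∀ n : ℕ, (n : ℕ∞) ≤ (s n).encard := by
    intro n
    induction n with
    | zero => simp
    | succ n ih =>
      have hlt := (finite_of_encard_le_coe (hN n)).encard_lt_encard
        ((hs n.le_succ).ssubset_of_ne (h n).symm)
      exact_mod_cast Order.add_one_le_of_lt (ih.trans_lt hlt)
  have := (hgrow (N + 1)).trans (hN (N + 1))
  norm_cast at this
  omega

lemma exists_forall_ge_eq_of_antitone_of_smul_mem {Y : Type*} [MulAction Γ Y]
    [Finite (orbitRel.Quotient Γ Y)] {E : ℕ → Set Y} (hE : Antitone E)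
    (hinv : ∀ n (g : Γ) y, y ∈ E n → g • y ∈ E n) : ∃ n₀, ∀ n ≥ n₀, E n = E n₀ := by
  obtain ⟨n₀, hn₀⟩ := WellFoundedLT.antitone_chain_condition
    (f := fun n => Quotient.mk (orbitRel Γ Y) '' E n) fun m n hmn => image_mono (hE hmn)
  refine ⟨n₀, fun n hn => (hE hn).antisymm fun y hy => ?_⟩
  obtain ⟨y', hy', hyy'⟩ : Quotient.mk _ y ∈ Quotient.mk (orbitRel Γ Y) '' E n :=
    hn₀ n hn ▸ mem_image_of_mem _ hy
  obtain ⟨g, rfl⟩ := Quotient.exact hyy'.symm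
  exact hinv n g y' hy'

namespace IsOligomorphicAction

lemma finite_quotient_stabilizer (hΓ : IsOligomorphicAction Γ X) {m : ℕ} (e : Fin m → X) :
    Finite (orbitRel.Quotient (stabilizer Γ e) X) := by
  have := hΓ (m + 1)
  refine Finite.of_injective
    (Quotient.lift (fun x => Quotient.mk (orbitRel Γ (Fin (m + 1) → X)) (Fin.cons x e))
      fun x y hxy => Quotient.sound ((orbitRel_finCons_iff e x y).2 hxy)) ?_
  rintro ⟨x⟩ ⟨y⟩ hxy
  exact Quotient.sound ((orbitRel_finCons_iff e x y).1 (Quotient.exact hxy))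

lemma finite_algClosure (hΓ : IsOligomorphicAction Γ X) (a : X) : (algClosure Γ a).Finite := by
  have := hΓ.finite_quotient_stabilizer ![a]
  have : Finite (orbitRel.Quotient (stabilizer Γ a) X) :=
    orbitRel.Quotient.finite_of_le fun g (hg : g ∈ stabilizer Γ ![a]) =>
      congrFun (mem_stabilizer_iff.1 hg) 0
  exact finite_setOf_orbit_finite

lemma smul_mem_algClosure_of_mem_upperCentralSeries (hΓ : IsOligomorphicAction Γ X)
    {n : ℕ} {z : Γ} (hz : z ∈ Subgroup.upperCentralSeries Γ n) (a : X) :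
    z • a ∈ algClosure Γ a := by
  induction n generalizing z with
  | zero =>
    rw [Subgroup.upperCentralSeries_zero, Subgroup.mem_bot] at hz
    rw [hz, one_smul]
    exact self_mem_algClosure a
  | succ n ih =>
    refine ((hΓ.finite_algClosure a).image (z • ·)).subset ?_
    rintro _ ⟨⟨g, hg⟩, rfl⟩
    have hw : z⁻¹ * g * z * g⁻¹ ∈ Subgroup.upperCentralSeries Γ n := by
      simpa [commutatorElement_def] using
        Subgroup.mem_upperCentralSeries_succ_iff.1 (inv_mem hz) g
    refine ⟨(z⁻¹ * g * z * g⁻¹) • a, ih hw, ?_⟩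
    simp [mul_smul, inv_smul_eq_iff.2 (mem_stabilizer_iff.1 hg).symm]

lemma commute_of_mem_upperCentralSeries_succ (hΓ : IsOligomorphicAction Γ X)
    {n : ℕ} {W : Set X}
    (hW : ∀ w ∈ Subgroup.upperCentralSeries Γ n, (∀ x ∈ W, w • x = x) → w = 1) {z g : Γ}
    (hz : z ∈ Subgroup.upperCentralSeries Γ (n + 1))
    (hg : ∀ y ∈ W, ∀ x ∈ algClosure Γ y, g • x = x) : Commute z g := by
  refine commutatorElement_eq_one_iff_commute.1 <|
    hW _ (Subgroup.mem_upperCentralSeries_succ_iff.1 hz g) fun x hx => ?_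
  have hgx : g⁻¹ • x = x := inv_smul_eq_iff.2 (hg x hx x (self_mem_algClosure x)).symm
  have hgzx : g • z⁻¹ • x = z⁻¹ • x :=
    hg x hx _ (hΓ.smul_mem_algClosure_of_mem_upperCentralSeries (inv_mem hz) x)
  rw [commutatorElement_def, mul_smul, mul_smul, mul_smul, hgx, hgzx, smul_inv_smul]

lemma exists_encard_upperCentralSeries_le (hΓ : IsOligomorphicAction Γ X)
    {ι : Type*} [Finite ι] (e : ι → X) :
    ∃ N : ℕ, ∀ n, (∀ z ∈ Subgroup.upperCentralSeries Γ n, z • e = e → z = 1) →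
      (Subgroup.upperCentralSeries Γ n : Set Γ).encard ≤ N := by
  obtain ⟨N, hN⟩ := (Finite.pi fun i => hΓ.finite_algClosure (e i)).exists_encard_eq_coe
  refine ⟨N, fun n hsep => hN ▸ encard_le_encard_of_injOn (f := (· • e))
    (fun z hz => mem_univ_pi.2 fun i =>
      hΓ.smul_mem_algClosure_of_mem_upperCentralSeries hz (e i))
    fun z hz z' hz' (hzz' : z • e = z' • e) => ?_⟩
  have := hsep (z⁻¹ * z') (mul_mem (inv_mem hz) hz') (by
    simp only [mul_smul]
    rw [← hzz', inv_smul_smul])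
  exact inv_mul_eq_one.1 this

lemma finite_upperCentralSeries [FaithfulSMul Γ X] (hΓ : IsOligomorphicAction Γ X) (n : ℕ) :
    (Subgroup.upperCentralSeries Γ n : Set Γ).Finite := by
  induction n with
  | zero => simp
  | succ n ih =>
    obtain ⟨W, hWfin, hW⟩ := exists_finite_forall_smul_eq_self_imp_eq_one (X := X) ih
    obtain ⟨m, e, he⟩ := (hWfin.biUnion fun y _ => hΓ.finite_algClosure y).fin_embedding
    have hcomm : ∀ z ∈ Subgroup.upperCentralSeries Γ (n + 1), ∀ h ∈ stabilizer Γ ⇑e,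
        Commute z h := fun z hz h hh => hΓ.commute_of_mem_upperCentralSeries_succ hW hz
      fun y hy x hx => by
        obtain ⟨i, rfl⟩ : x ∈ range e := he ▸ mem_biUnion hy hx
        exact congrFun (mem_stabilizer_iff.1 hh) i
    have := hΓ.finite_quotient_stabilizer e
    obtain ⟨N, hN⟩ := hΓ.exists_encard_upperCentralSeries_le
      (Quotient.out : orbitRel.Quotient (stabilizer Γ ⇑e) X → X)
    exact finite_of_encard_le_coe <| hN (n + 1) fun z hz hfix =>
      eq_of_smul_eq_smul (α := X) fun x => by
        rw [one_smul]
        exact smul_eq_self_of_forall_commute (hcomm z hz) (congrFun hfix) x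

lemma exists_forall_ge_encard_upperCentralSeries_le [FaithfulSMul Γ X]
    (hΓ : IsOligomorphicAction Γ X) :
    ∃ n₀ N : ℕ, ∀ n ≥ n₀, (Subgroup.upperCentralSeries Γ n : Set Γ).encard ≤ N := by
  let E : ℕ → Set (Fin 2 → X) := fun n =>
    {p | ∀ z ∈ Subgroup.upperCentralSeries Γ n, z • p 0 = p 0 ↔ z • p 1 = p 1}
  have := hΓ 2
  obtain ⟨n₀, hn₀⟩ := exists_forall_ge_eq_of_antitone_of_smul_mem (Γ := Γ) (E := E)
    (fun m n hmn p hp z hz => hp z (Subgroup.upperCentralSeries_mono Γ hmn hz))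
    fun n g p hp z hz => by
      have hconj : ∀ a : X, (g⁻¹ * z * g) • a = a ↔ z • g • a = g • a := fun a => by
        rw [mul_smul, mul_smul, inv_smul_eq_iff]
      have := hp _ (by simpa using Subgroup.Normal.conj_mem inferInstance z hz g⁻¹)
      rwa [hconj, hconj] at this
  let fix : X → Set Γ := fun a =>
    (Subgroup.upperCentralSeries Γ n₀ : Set Γ) ∩ stabilizer Γ a
  have : Finite (range fix) := ((hΓ.finite_upperCentralSeries n₀).finite_subsets.subset
    (range_subset_iff.2 fun a => inter_subset_left)).to_subtype
  obtain ⟨N, hN⟩ := hΓ.exists_encard_upperCentralSeries_le (rangeSplitting fix)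
  refine ⟨n₀, N, fun n hn => hN n fun z hz hfix => eq_of_smul_eq_smul (α := X) fun a => ?_⟩
  set r := rangeSplitting fix ⟨fix a, mem_range_self a⟩
  have hr : ![r, a] ∈ E n₀ := fun z hz => by
    have := congrArg (z ∈ ·) (apply_rangeSplitting fix ⟨fix a, mem_range_self a⟩)
    simpa [fix, hz] using this
  rw [one_smul]
  exact ((hn₀ n hn).symm ▸ hr : ![r, a] ∈ E n) z hz |>.1 (congrFun hfix _)

end IsOligomorphicAction

end

lemma IsOligomorphic.isOligomorphicAction {G : Subgroup (Equiv.Perm ℕ)}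
    (hG : IsOligomorphic G) : IsOligomorphicAction G ℕ
  | 0 => inferInstance
  | n + 1 => hG (n + 1) (Nat.le_add_left 1 n)

theorem stmt7_general (G : Subgroup (Equiv.Perm ℕ))
    (holig : IsOligomorphic G) :
    ∃ n : ℕ, upperCentralSeries G (n + 1) = upperCentralSeries G n := by
  obtain ⟨n₀, N, hN⟩ :=
    holig.isOligomorphicAction.exists_forall_ge_encard_upperCentralSeries_le
  obtain ⟨k, hk⟩ := Set.exists_succ_eq_of_monotone_of_encard_le
    (s := fun k => (Subgroup.upperCentralSeries G (n₀ + k) : Set G))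
    (fun i j hij => Subgroup.upperCentralSeries_mono G (by omega)) fun k => hN _ (by omega)
  exact ⟨n₀ + k, SetLike.coe_injective hk⟩

/-- For a closed oligomorphic subgroup `G` of `Equiv.Perm ℕ`,
the upper central series stabilizes at a finite stage. -/
theorem stmt7 (G : Subgroup (Equiv.Perm ℕ)) (hcl : IsClosedSubgroup G)
    (holig : IsOligomorphic G) :
    ∃ n : ℕ, upperCentralSeries G (n + 1) = upperCentralSeries G n :=
  stmt7_general G holig
end

section
/- Let G be a closed subgroup of Equiv.Perm ℕ and let α ∈ Equiv.Perm ℕ. Then α lies in the normalizer of G in Equiv.Perm ℕ (i.e. α G α⁻¹ = G) if and only if for every n ≥ 1 and every orbit V of the diagonal action of G on (Fin n → ℕ), the image {α ∘ t : t ∈ V} is again an orbit of that action. -/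
/-!
Conjugation intertwines the diagonal actions: `α ∘ (g • t) = (α g α⁻¹) • (α ∘ t)`, which gives
the forward direction. Conversely, if `α` maps orbits onto orbits, it maps the orbit of `t` onto
that of `α ∘ t`, and then so does `α⁻¹`. Applied to the tuple `(α⁻¹ 0, …, α⁻¹ n)` this shows that
`α g α⁻¹` agrees with an element of `G` on every initial segment, hence lies in the closed group
`G`; the same argument for `α⁻¹` gives `α⁻¹ G α ⊆ G`.
-/

open MulAction

section Tuples

variable {X ι : Type*}

theorem Equiv.Perm.comp_smul_eq_conj_smul_comp (α g : Equiv.Perm X) (t : ι → X) :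
    ⇑α ∘ (g • t) = (α * g * α⁻¹) • (⇑α ∘ t) := by
  ext i
  simp [Equiv.Perm.smul_def]

theorem image_comp_orbit_eq_of_mem_normalizer {G : Subgroup (Equiv.Perm X)} {α : Equiv.Perm X}
    (hα : α ∈ Subgroup.normalizer (G : Set (Equiv.Perm X))) (t : ι → X) :
    (fun u : ι → X => ⇑α ∘ u) '' orbit G t = orbit G (⇑α ∘ t) := by
  ext u
  constructor
  · rintro ⟨v, ⟨g, rfl⟩, rfl⟩
    exact ⟨⟨α * g * α⁻¹, (Subgroup.mem_normalizer_iff.mp hα g).mp g.2⟩,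
      (Equiv.Perm.comp_smul_eq_conj_smul_comp α g t).symm⟩
  · rintro ⟨h, rfl⟩
    have hconj : α⁻¹ * h * α ∈ G := (Subgroup.mem_normalizer_iff''.mp hα h).mp h.2
    refine ⟨(⟨α⁻¹ * h * α, hconj⟩ : G) • t, mem_orbit t _, ?_⟩
    change ⇑α ∘ ((α⁻¹ * h * α) • t) = (h : Equiv.Perm X) • (⇑α ∘ t)
    rw [Equiv.Perm.comp_smul_eq_conj_smul_comp]
    congr 1
    group

theorem image_comp_orbit_eq_orbit_comp {G : Subgroup (Equiv.Perm X)} {α : Equiv.Perm X}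
    {t s : ι → X} (h : (fun u : ι → X => ⇑α ∘ u) '' orbit G t = orbit G s) :
    (fun u : ι → X => ⇑α ∘ u) '' orbit G t = orbit G (⇑α ∘ t) := by
  rw [h, eq_comm, orbit_eq_iff, ← h]
  exact Set.mem_image_of_mem _ (mem_orbit_self t)

/-- `α` maps the orbit of `α⁻¹ ∘ t` onto the orbit of `t`. -/
theorem image_comp_orbit_eq_inv {G : Subgroup (Equiv.Perm X)} {α : Equiv.Perm X}
    (h : ∀ t : ι → X, (fun u : ι → X => ⇑α ∘ u) '' orbit G t = orbit G (⇑α ∘ t))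
    (t : ι → X) :
    (fun u : ι → X => ⇑α⁻¹ ∘ u) '' orbit G t = orbit G (⇑α⁻¹ ∘ t) := by
  have key : (fun u : ι → X => ⇑α ∘ u) '' orbit G (⇑α⁻¹ ∘ t) = orbit G t := by
    simpa [← Function.comp_assoc] using h (⇑α⁻¹ ∘ t)
  rw [← key, Set.image_image]
  simp [← Function.comp_assoc]

end Tuples

theorem conj_mem_of_image_comp_orbit_eq {G : Subgroup (Equiv.Perm ℕ)} (hcl : IsClosedSubgroup G)
    {α : Equiv.Perm ℕ}
    (h : ∀ n : ℕ, 1 ≤ n → ∀ t : Fin n → ℕ,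
      (fun u : Fin n → ℕ => ⇑α ∘ u) '' orbit G t = orbit G (⇑α ∘ t))
    {g : Equiv.Perm ℕ} (hg : g ∈ G) : α * g * α⁻¹ ∈ G := by
  refine hcl _ fun n => ?_
  -- `α ∘ t` is the initial segment `0, …, n`, on which `α g α⁻¹` must agree with some `k ∈ G`.
  let t : Fin (n + 1) → ℕ := fun i => α⁻¹ i
  have hαt : ⇑α ∘ t = fun i : Fin (n + 1) => (i : ℕ) := by ext i; simp [t]
  obtain ⟨k, hk⟩ : ⇑α ∘ (g • t) ∈ orbit G (⇑α ∘ t) := by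
    rw [← h (n + 1) (by omega) t]
    exact Set.mem_image_of_mem _ (mem_orbit t (⟨g, hg⟩ : G))
  refine ⟨k, k.2, fun i hi => ?_⟩
  have := congrFun hk ⟨i, by omega⟩
  rw [Equiv.Perm.comp_smul_eq_conj_smul_comp, hαt] at this
  simpa [Equiv.Perm.smul_def, Subgroup.smul_def] using this.symm

/-- For a closed subgroup `G` of `Equiv.Perm ℕ` and a
permutation `α`, `α` normalizes `G` iff for every `n ≥ 1` the image under
`α` of every orbit of the diagonal action of `G` on `n`-tuples is again such
an orbit. -/
theorem stmt8 (G : Subgroup (Equiv.Perm ℕ)) (hcl : IsClosedSubgroup G)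
    (α : Equiv.Perm ℕ) :
    α ∈ Subgroup.normalizer (G : Set (Equiv.Perm ℕ)) ↔
      ∀ n : ℕ, 1 ≤ n → ∀ t : Fin n → ℕ,
        ∃ s : Fin n → ℕ,
          (fun u : Fin n → ℕ => ⇑α ∘ u) '' MulAction.orbit G t =
            MulAction.orbit G s := by
  refine ⟨fun hα n _ t => ⟨_, image_comp_orbit_eq_of_mem_normalizer hα t⟩, fun horb => ?_⟩
  have hmaps : ∀ n, 1 ≤ n → ∀ t : Fin n → ℕ,
      (fun u : Fin n → ℕ => ⇑α ∘ u) '' orbit G t = orbit G (⇑α ∘ t) := fun n hn t =>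
    image_comp_orbit_eq_orbit_comp (horb n hn t).choose_spec
  have hmaps_inv : ∀ n, 1 ≤ n → ∀ t : Fin n → ℕ,
      (fun u : Fin n → ℕ => ⇑α⁻¹ ∘ u) '' orbit G t = orbit G (⇑α⁻¹ ∘ t) := fun n hn =>
    image_comp_orbit_eq_inv (hmaps n hn)
  refine Subgroup.mem_normalizer_iff.mpr fun g => ⟨conj_mem_of_image_comp_orbit_eq hcl hmaps, ?_⟩
  intro hg
  simpa [mul_assoc] using conj_mem_of_image_comp_orbit_eq hcl hmaps_inv hg
end

section
/- Let k ≥ 5 and let S be a subset of the alternating group on Fin k that generates it as a group and contains a 3-cycle. Then every element g of the alternating group on Fin k can be written as a product of at most 3·k⁴ elements of S ∪ S⁻¹, i.e. there is a list l of permutations, each lying in S or having its inverse in S, with l.length ≤ 3·k⁴ and l.prod = g. -/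
/-!
An even permutation of `Fin k` is a product of at most `k` transpositions, and pairing them
writes it as a product of at most `k` three-cycles. As `k ≥ 5`, every three-cycle is conjugate in
the alternating group, hence by an element of `closure S`, to the three-cycle `σ ∈ S`. The
conjugates `w σ w⁻¹` with `w` a word of length at most `n` in `S ∪ S⁻¹` form an increasing chain
of sets of three-cycles; once it stops growing it is closed under conjugation by the letters, and
there are at most `k³` three-cycles, so words of length `k³` already reach every three-cycle. Each
three-cycle thus costs at most `2k³ + 1` letters, and every element at most `k (2k³ + 1) ≤ 3k⁴`.
-/

open Finset Subgroup

def ProdOfAtMost {G : Type*} [Monoid G] (U : Set G) (n : ℕ) (g : G) : Prop :=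
  ∃ l : List G, (∀ x ∈ l, x ∈ U) ∧ l.length ≤ n ∧ l.prod = g

namespace ProdOfAtMost

variable {G : Type*}

section Monoid

variable [Monoid G] {U V : Set G} {m n : ℕ} {g h : G}

theorem one : ProdOfAtMost U 0 1 :=
  ⟨[], by simp, le_rfl, rfl⟩

theorem of_mem (hg : g ∈ U) : ProdOfAtMost U 1 g :=
  ⟨[g], by simpa using hg, le_rfl, List.prod_singleton⟩

theorem mono (hg : ProdOfAtMost U m g) (hmn : m ≤ n) : ProdOfAtMost U n g :=
  let ⟨l, hlU, hlen, hl⟩ := hg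
  ⟨l, hlU, hlen.trans hmn, hl⟩

theorem mul (hg : ProdOfAtMost U m g) (hh : ProdOfAtMost U n h) :
    ProdOfAtMost U (m + n) (g * h) := by
  obtain ⟨l, hlU, hl, rfl⟩ := hg
  obtain ⟨l', hlU', hl', rfl⟩ := hh
  refine ⟨l ++ l', ?_, by simp; omega, List.prod_append⟩
  simpa [or_imp, forall_and] using ⟨hlU, hlU'⟩

theorem list_prod {l : List G} (hl : ∀ g ∈ l, ProdOfAtMost U n g) :
    ProdOfAtMost U (l.length * n) l.prod := by
  induction l with
  | nil => simpa using one
  | cons g l ih =>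
    simp only [List.forall_mem_cons] at hl
    simpa [add_mul, add_comm] using hl.1.mul (ih hl.2)

theorem trans (hg : ProdOfAtMost U m g) (hU : ∀ u ∈ U, ProdOfAtMost V n u) :
    ProdOfAtMost V (m * n) g := by
  obtain ⟨l, hlU, hl, rfl⟩ := hg
  exact (list_prod fun u hu ↦ hU u (hlU u hu)).mono (Nat.mul_le_mul_right n hl)

theorem map {H : Type*} [Monoid H] (f : G →* H) {W : Set H} (hg : ProdOfAtMost (f ⁻¹' W) n g) :
    ProdOfAtMost W n (f g) := by
  obtain ⟨l, hlW, hl, rfl⟩ := hg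
  exact ⟨l.map f, by simpa using hlW, by simpa using hl, by simp [map_list_prod]⟩

end Monoid

theorem inv [Group G] {U : Set G} {n : ℕ} {g : G} (hU : ∀ u ∈ U, u⁻¹ ∈ U)
    (hg : ProdOfAtMost U n g) : ProdOfAtMost U n g⁻¹ := by
  obtain ⟨l, hlU, hl, rfl⟩ := hg
  refine ⟨(l.map (·⁻¹)).reverse, ?_, by simpa using hl, (List.prod_inv_reverse l).symm⟩
  simp only [List.mem_reverse, List.mem_map]
  rintro _ ⟨u, hu, rfl⟩
  exact hU u (hlU u hu)

end ProdOfAtMost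

theorem Finset.exists_le_card_succ_subset_of_monotone {X : Type*} {A : Finset X}
    {B : ℕ → Finset X} (hB : Monotone B) (hBA : ∀ n, B n ⊆ A) :
    ∃ n ≤ #A, B (n + 1) ⊆ B n := by
  by_contra! h
  have hgrow : ∀ n ≤ #A + 1, n ≤ #(B n) := by
    intro n hn
    induction n with
    | zero => exact Nat.zero_le _
    | succ n ih =>
      exact (ih (by omega)).trans_lt
        (card_lt_card ((hB n.le_succ).ssubset_of_not_subset (h n (by omega))))
  have := (hgrow _ le_rfl).trans (card_le_card (hBA (#A + 1)))
  omega

theorem MulAction.exists_prodOfAtMost_smul_eq {G X : Type*} [Group G] [MulAction G X]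
    {U : Set G} (hU : ∀ u ∈ U, u⁻¹ ∈ U) {x : X} {A : Finset X}
    (hA : ∀ g ∈ closure U, g • x ∈ A) {g : G} (hg : g ∈ closure U) :
    ∃ w, ProdOfAtMost U #A w ∧ w • x = g • x := by
  classical
  -- Once the balls stop growing, `ball n` is closed under the letters, so it holds the whole orbit.
  let ball (n : ℕ) : Finset X := A.filter fun y ↦ ∃ w, ProdOfAtMost U n w ∧ w • x = y
  have ball_mono : Monotone ball := fun m n hmn ↦
    monotone_filter_right _ fun _ _ ⟨w, hw, hwx⟩ ↦ ⟨w, hw.mono hmn, hwx⟩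
  obtain ⟨n, hnA, hstable⟩ :=
    exists_le_card_succ_subset_of_monotone ball_mono fun n ↦ filter_subset _ _
  have step : ∀ u ∈ U, ∀ g ∈ closure U, g • x ∈ ball n → (u * g) • x ∈ ball n := by
    intro u hu g hg hgx
    obtain ⟨w, hw, hwx⟩ := (mem_filter.mp hgx).2
    refine hstable (mem_filter.mpr ⟨hA _ (mul_mem (subset_closure hu) hg), u * w, ?_, ?_⟩)
    · simpa [add_comm] using (ProdOfAtMost.of_mem hu).mul hw
    · rw [mul_smul, hwx, mul_smul]
  have hball : g • x ∈ ball n := by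
    induction hg using closure_induction_left with
    | one => exact mem_filter.mpr ⟨hA 1 (one_mem _), 1, ProdOfAtMost.one.mono n.zero_le, rfl⟩
    | mul_left u hu g hg ih => exact step u hu g hg ih
    | inv_mul_cancel u hu g hg ih => exact step u⁻¹ (hU u hu) g hg ih
  obtain ⟨w, hw, hwx⟩ := (mem_filter.mp hball).2
  exact ⟨w, hw.mono hnA, hwx⟩

theorem exists_prodOfAtMost_conj_eq {G : Type*} [Group G] {U : Set G} (hU : ∀ u ∈ U, u⁻¹ ∈ U)
    {x : G} {A : Finset G} (hA : ∀ g ∈ closure U, g * x * g⁻¹ ∈ A) {g : G}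
    (hg : g ∈ closure U) : ∃ w, ProdOfAtMost U #A w ∧ w * x * w⁻¹ = g * x * g⁻¹ := by
  let V : Set (ConjAct G) := ConjAct.ofConjAct ⁻¹' U
  have hV : ∀ v ∈ V, v⁻¹ ∈ V := fun v hv ↦ hU _ hv
  have hVA : ∀ c ∈ closure V, c • x ∈ A := fun c hc ↦
    hA _ (MonoidHom.closure_preimage_le ConjAct.ofConjAct.toMonoidHom U hc)
  obtain ⟨w, hw, hwx⟩ := MulAction.exists_prodOfAtMost_smul_eq hV hVA
    (MonoidHom.closure_preimage_le ConjAct.toConjAct.toMonoidHom V hg)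
  exact ⟨_, hw.map ConjAct.ofConjAct.toMonoidHom, hwx⟩

namespace Equiv.Perm

variable {α : Type*} [DecidableEq α] [Fintype α]

theorem exists_swap_list_length_le_card_support (f : Perm α) :
    ∃ l : List (Perm α), (∀ σ ∈ l, IsSwap σ) ∧ l.length ≤ #f.support ∧ l.prod = f := by
  induction h : #f.support using Nat.strong_induction_on generalizing f with
  | _ n ih =>
  by_cases hf : f = 1
  · exact ⟨[], by simp, by simp, by simp [hf]⟩
  obtain ⟨x, hx⟩ : ∃ x, f x ≠ x := not_forall.mp fun h ↦ hf (Equiv.ext h)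
  have hlt := card_support_swap_mul hx
  obtain ⟨l, hl, hlen, hprod⟩ := ih _ (h ▸ hlt) _ rfl
  refine ⟨swap x (f x) :: l, ?_, ?_, ?_⟩
  · exact List.forall_mem_cons.mpr ⟨⟨x, f x, hx.symm, rfl⟩, hl⟩
  · simp only [List.length_cons]
    omega
  · rw [List.prod_cons, hprod, ← mul_assoc, swap_mul_self, one_mul]

theorem prodOfAtMost_swap_mul_swap_same {a b c : α} (hab : a ≠ b) (hac : a ≠ c) :
    ProdOfAtMost {σ : Perm α | IsThreeCycle σ} 1 (swap a b * swap a c) := by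
  by_cases hbc : b = c
  · subst hbc
    simpa using ProdOfAtMost.one.mono zero_le_one
  · exact ProdOfAtMost.of_mem (isThreeCycle_swap_mul_swap_same hab hac hbc)

theorem IsSwap.prodOfAtMost_mul {σ τ : Perm α} (hσ : IsSwap σ) (hτ : IsSwap τ) :
    ProdOfAtMost {σ : Perm α | IsThreeCycle σ} 2 (σ * τ) := by
  obtain ⟨a, b, hab, rfl⟩ := hσ
  obtain ⟨c, d, hcd, rfl⟩ := hτ
  by_cases hac : a = c
  · subst hac
    exact (prodOfAtMost_swap_mul_swap_same hab hcd).mono one_le_two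
  have : swap a b * swap c d = swap a b * swap a c * (swap c a * swap c d) := by
    simp [swap_comm c a, mul_assoc]
  rw [this]
  exact (prodOfAtMost_swap_mul_swap_same hab hac).mul
    (prodOfAtMost_swap_mul_swap_same (Ne.symm hac) hcd)

theorem prodOfAtMost_isThreeCycle_list_prod :
    ∀ {l : List (Perm α)}, (∀ σ ∈ l, IsSwap σ) → Even l.length →
      ProdOfAtMost {σ : Perm α | IsThreeCycle σ} l.length l.prod
  | [], _, _ => ProdOfAtMost.one
  | [_], _, h => absurd h (by simp)
  | σ :: τ :: l, hl, h => by
    simp only [List.forall_mem_cons] at hl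
    have hl' := prodOfAtMost_isThreeCycle_list_prod hl.2.2 (by simpa [parity_simps] using h)
    rw [List.prod_cons, List.prod_cons, ← mul_assoc]
    exact ((hl.1.prodOfAtMost_mul hl.2.1).mul hl').mono (by simp; omega)

theorem prodOfAtMost_isThreeCycle_of_mem_alternatingGroup {g : Perm α}
    (hg : g ∈ alternatingGroup α) :
    ProdOfAtMost {σ : Perm α | IsThreeCycle σ} (Fintype.card α) g := by
  obtain ⟨l, hl, hlen, rfl⟩ := exists_swap_list_length_le_card_support g
  have heven := (prod_list_swap_mem_alternatingGroup_iff_even_length hl).mp hg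
  exact (prodOfAtMost_isThreeCycle_list_prod hl heven).mono (hlen.trans (card_le_univ _))

theorem IsThreeCycle.exists_eq_swap_mul_swap {σ : Perm α} (hσ : IsThreeCycle σ) :
    ∃ a b c, σ = swap a b * swap b c := by
  obtain ⟨a, ha⟩ : σ.support.Nonempty := card_pos.mp (by rw [hσ.card_support]; norm_num)
  exact ⟨a, σ a, σ (σ a), hσ.eq_swap_mul_swap_iff_mem_support.mpr ha⟩

theorem IsThreeCycle.prodOfAtMost_of_closure_eq (h5 : 5 ≤ Fintype.card α)
    {S : Set (Perm α)} (hS : closure S = alternatingGroup α) {σ τ : Perm α} (hσS : σ ∈ S)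
    (hσ : IsThreeCycle σ) (hτ : IsThreeCycle τ) :
    ProdOfAtMost (S ∪ S⁻¹) (2 * Fintype.card α ^ 3 + 1) τ := by
  let A := univ.image fun p : α × α × α ↦ swap p.1 p.2.1 * swap p.2.1 p.2.2
  have hA : #A ≤ Fintype.card α ^ 3 := card_image_le.trans (by simp [pow_three])
  have hconjA : ∀ g : Perm α, g * σ * g⁻¹ ∈ A := fun g ↦ by
    have : IsThreeCycle (g * σ * g⁻¹) := by rwa [IsThreeCycle, cycleType_conj]
    obtain ⟨a, b, c, h⟩ := this.exists_eq_swap_mul_swap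
    exact mem_image.mpr ⟨(a, b, c), mem_univ _, h.symm⟩
  have hU : ∀ u ∈ S ∪ S⁻¹, u⁻¹ ∈ S ∪ S⁻¹ := fun u hu ↦ by simpa [or_comm] using hu
  obtain ⟨c, hc⟩ := isConj_iff.mp <| alternatingGroup.isThreeCycle_isConj (by simpa using h5)
    (σ := ⟨σ, hσ.mem_alternatingGroup⟩) (τ := ⟨τ, hτ.mem_alternatingGroup⟩) hσ hτ
  have hc : (c : Perm α) * σ * (c : Perm α)⁻¹ = τ := congrArg Subtype.val hc
  have hcS : (c : Perm α) ∈ closure (S ∪ S⁻¹) := by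
    rw [Subgroup.closure_union, closure_inv, sup_idem, hS]
    exact c.2
  obtain ⟨w, hw, hwσ⟩ := exists_prodOfAtMost_conj_eq hU (fun g _ ↦ hconjA g) hcS
  rw [← hc, ← hwσ]
  refine (((hw.mono hA).mul (ProdOfAtMost.of_mem (Or.inl hσS))).mul ((hw.inv hU).mono hA)).mono ?_
  omega

end Equiv.Perm

theorem stmt10_general (k : ℕ) (hk : 5 ≤ k) (S : Set (Equiv.Perm (Fin k)))
    (hgen : Subgroup.closure S = alternatingGroup (Fin k))
    (h3 : ∃ σ ∈ S, Equiv.Perm.IsThreeCycle σ) :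
    ∀ g ∈ alternatingGroup (Fin k),
      ∃ l : List (Equiv.Perm (Fin k)),
        (∀ x ∈ l, x ∈ S ∨ x⁻¹ ∈ S) ∧ l.length ≤ 3 * k ^ 4 ∧ l.prod = g := by
  intro g hg
  obtain ⟨σ, hσS, hσ⟩ := h3
  have h5 : 5 ≤ Fintype.card (Fin k) := by simpa using hk
  have hthree := Equiv.Perm.prodOfAtMost_isThreeCycle_of_mem_alternatingGroup hg
  obtain ⟨l, hl, hlen, rfl⟩ :=
    hthree.trans fun τ hτ ↦ hσ.prodOfAtMost_of_closure_eq h5 hgen hσS hτ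
  refine ⟨l, hl, hlen.trans ?_, rfl⟩
  have : k ≤ k ^ 4 := Nat.le_self_pow (by norm_num) k
  simp only [Fintype.card_fin]
  nlinarith

/-- If `k ≥ 5` and `S` is a subset of the alternating group on
`Fin k` that generates it and contains a 3-cycle, then every element of the
alternating group is a product of at most `3 * k ^ 4` elements of
`S ∪ S⁻¹`. -/
theorem stmt10 (k : ℕ) (hk : 5 ≤ k) (S : Set (Equiv.Perm (Fin k)))
    (hsub : ∀ σ ∈ S, σ ∈ alternatingGroup (Fin k))
    (hgen : Subgroup.closure S = alternatingGroup (Fin k))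
    (h3 : ∃ σ ∈ S, Equiv.Perm.IsThreeCycle σ) :
    ∀ g ∈ alternatingGroup (Fin k),
      ∃ l : List (Equiv.Perm (Fin k)),
        (∀ x ∈ l, x ∈ S ∨ x⁻¹ ∈ S) ∧ l.length ≤ 3 * k ^ 4 ∧ l.prod = g :=
  stmt10_general k hk S hgen h3
end

section
/- Let Z be a metric space whose distance function d satisfies the ultrametric inequality d(x, z) ≤ max (d(x, y)) (d(y, z)) for all x, y, z, and satisfies d(x, y) ≤ 1 for all x, y. Define ρ on pairs (r, x) with r a nonnegative real and x ∈ Z by ρ((r₀, x₀), (r₁, x₁)) = |r₀ − r₁| + min r₀ r₁ * d(x₀, x₁). Then ρ satisfies the triangle inequality: for all nonnegative reals r₀, r₁, r₂ and all x₀, x₁, x₂ ∈ Z, ρ((r₀, x₀), (r₂, x₂)) ≤ ρ((r₀, x₀), (r₁, x₁)) + ρ((r₁, x₁), (r₂, x₂)). -/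
/-!
If `r₁ ≤ min r₀ r₂`, passing through the lower level `r₁` costs `2 (min r₀ r₂ - r₁)` in the
radial terms, which pays for the angular loss `(min r₀ r₂ - r₁) d(x₀, x₂)` since the diameter
is at most `2`; the ordinary triangle inequality in `Z` handles the rest. If `r₁ ≥ min r₀ r₂`,
both angular weights on the right dominate `min r₀ r₂`, and the ultrametric inequality bounds
`d(x₀, x₂)` by one of `d(x₀, x₁)`, `d(x₁, x₂)`.
-/

section ConeDist

variable {Z : Type*} [PseudoMetricSpace Z]

noncomputable def coneDist (p q : ℝ × Z) : ℝ :=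
  |p.1 - q.1| + min p.1 q.1 * dist p.2 q.2

lemma coneDist_triangle_of_le_min {r₀ r₁ r₂ : ℝ} (x₀ x₁ x₂ : Z) (hr₁ : 0 ≤ r₁)
    (h : r₁ ≤ min r₀ r₂) (hd : dist x₀ x₂ ≤ 2) :
    coneDist (r₀, x₀) (r₂, x₂) ≤ coneDist (r₀, x₀) (r₁, x₁) + coneDist (r₁, x₁) (r₂, x₂) := by
  have h₁₀ : r₁ ≤ r₀ := h.trans (min_le_left _ _)
  have h₁₂ : r₁ ≤ r₂ := h.trans (min_le_right _ _)
  have habs : |r₀ - r₂| = r₀ + r₂ - 2 * min r₀ r₂ := by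
    linarith [min_add_max r₀ r₂, max_sub_min_eq_abs' r₀ r₂]
  have hloss : 0 ≤ (min r₀ r₂ - r₁) * (2 - dist x₀ x₂) :=
    mul_nonneg (sub_nonneg.2 h) (sub_nonneg.2 hd)
  have htri : r₁ * dist x₀ x₂ ≤ r₁ * (dist x₀ x₁ + dist x₁ x₂) :=
    mul_le_mul_of_nonneg_left (dist_triangle _ _ _) hr₁
  simp only [coneDist]
  rw [min_eq_right h₁₀, min_eq_left h₁₂, abs_of_nonneg (sub_nonneg.2 h₁₀),
    abs_of_nonpos (sub_nonpos.2 h₁₂), habs]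
  linarith

lemma coneDist_triangle_of_min_le [IsUltrametricDist Z] {r₀ r₁ r₂ : ℝ} (x₀ x₁ x₂ : Z)
    (hm : 0 ≤ min r₀ r₂) (h : min r₀ r₂ ≤ r₁) :
    coneDist (r₀, x₀) (r₂, x₂) ≤ coneDist (r₀, x₀) (r₁, x₁) + coneDist (r₁, x₁) (r₂, x₂) := by
  have hm₀₁ : min r₀ r₂ ≤ min r₀ r₁ := le_min (min_le_left _ _) h
  have hm₁₂ : min r₀ r₂ ≤ min r₁ r₂ := le_min h (min_le_right _ _)
  have hterm₀₁ : 0 ≤ min r₀ r₁ * dist x₀ x₁ := mul_nonneg (hm.trans hm₀₁) dist_nonneg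
  have hterm₁₂ : 0 ≤ min r₁ r₂ * dist x₁ x₂ := mul_nonneg (hm.trans hm₁₂) dist_nonneg
  have hangle : min r₀ r₂ * dist x₀ x₂ ≤
      min r₀ r₁ * dist x₀ x₁ + min r₁ r₂ * dist x₁ x₂ := by
    have hult := IsUltrametricDist.dist_triangle_max x₀ x₁ x₂
    rcases le_total (dist x₀ x₁) (dist x₁ x₂) with hle | hle
    · rw [max_eq_right hle] at hult
      linarith [mul_le_mul hm₁₂ hult dist_nonneg (hm.trans hm₁₂)]
    · rw [max_eq_left hle] at hult
      linarith [mul_le_mul hm₀₁ hult dist_nonneg (hm.trans hm₀₁)]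
  simp only [coneDist]
  linarith [abs_sub_le r₀ r₁ r₂]

end ConeDist

/-- If `Z` is a metric space whose distance satisfies the
ultrametric inequality and is bounded by `1`, then
`ρ((r₀,x₀),(r₁,x₁)) = |r₀ - r₁| + min r₀ r₁ * dist x₀ x₁` satisfies the
triangle inequality on pairs `(r, x)` with `r ≥ 0`. -/
theorem stmt11 (Z : Type*) [MetricSpace Z]
    (hult : ∀ x y z : Z, dist x z ≤ max (dist x y) (dist y z))
    (hbdd : ∀ x y : Z, dist x y ≤ 1)
    (r₀ r₁ r₂ : ℝ) (h₀ : 0 ≤ r₀) (h₁ : 0 ≤ r₁) (h₂ : 0 ≤ r₂)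
    (x₀ x₁ x₂ : Z) :
    |r₀ - r₂| + min r₀ r₂ * dist x₀ x₂ ≤
      (|r₀ - r₁| + min r₀ r₁ * dist x₀ x₁) +
      (|r₁ - r₂| + min r₁ r₂ * dist x₁ x₂) := by
  have : IsUltrametricDist Z := ⟨hult⟩
  change coneDist (r₀, x₀) (r₂, x₂) ≤ coneDist (r₀, x₀) (r₁, x₁) + coneDist (r₁, x₁) (r₂, x₂)
  rcases le_total r₁ (min r₀ r₂) with h | h
  · exact coneDist_triangle_of_le_min x₀ x₁ x₂ h₁ h (by linarith [hbdd x₀ x₂])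
  · exact coneDist_triangle_of_min_le x₀ x₁ x₂ (le_min h₀ h₂) h
end

section
/- Let (Z_k) be a sequence of points of Cantor space and (c_k) a sequence of reals with c_k > 0 for all k and ∑_k c_k = 1, and let μ = ∑_k c_k · δ_{Z_k}. Then μ is Martin-Löf absolutely continuous if and only if every Z_k is Martin-Löf random. -/
/-!
If `Z` is an atom of an ML-a.c. measure `μ`, then a test covering `Z` at every level would have
`μ (G_m) ≥ μ {Z} > 0` for all `m`. Conversely, a random point `Z` escapes the tail test
`⋃_{n > m} G_n` at some level, so it lies in only finitely many `G_n`. Hence if every `Z_k` is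
random, no `Z_k` lies in `limsup G_m`, and since `μ` is finite,
`inf_m μ (G_m) ≤ μ (limsup G_m) = 0`.
-/

open MeasureTheory
open scoped ENNReal

/-- The basic clopen cylinder `[σ]` of a finite binary string `σ`:
all `Z : ℕ → Bool` extending `σ`. -/
def cyl (σ : List Bool) : Set (ℕ → Bool) :=
  {Z | ∀ i : Fin σ.length, Z i = σ.get i}

/-- The `m`-th open set `G_m` determined by a test `f`: the union of the
cylinders `[σ]` over the strings `σ` enumerated by `f m`. -/
def testSet (f : ℕ → ℕ → Option (List Bool)) (m : ℕ) : Set (ℕ → Bool) :=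
  ⋃ σ ∈ {σ : List Bool | ∃ i, f m i = some σ}, cyl σ

/-- `lam` is the fair-coin product probability measure on Cantor space:
the (unique) Borel probability measure giving each cylinder `[σ]` measure
`2 ^ (-|σ|)`. -/
def IsFairCoin (lam : Measure (ℕ → Bool)) : Prop :=
  IsProbabilityMeasure lam ∧ ∀ σ : List Bool, lam (cyl σ) = 2⁻¹ ^ σ.length

/-- A Martin-Löf test with respect to the fair-coin measure `lam`: a
computable `f : ℕ → ℕ → Option (List Bool)` whose associated open sets
`G_m` satisfy `lam (G_m) ≤ 2 ^ (-m)`. -/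
def IsMLTest (lam : Measure (ℕ → Bool)) (f : ℕ → ℕ → Option (List Bool)) : Prop :=
  Computable₂ f ∧ ∀ m : ℕ, lam (testSet f m) ≤ 2⁻¹ ^ m

/-- `Z` is Martin-Löf random: it passes every Martin-Löf test. -/
def MLRandom (lam : Measure (ℕ → Bool)) (Z : ℕ → Bool) : Prop :=
  ∀ f, IsMLTest lam f → ∃ m, Z ∉ testSet f m

/-- A measure `μ` is Martin-Löf absolutely continuous:
`inf_m μ (G_m) = 0` for every Martin-Löf test. -/
def MLAC (lam μ : Measure (ℕ → Bool)) : Prop :=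
  ∀ f, IsMLTest lam f → ⨅ m, μ (testSet f m) = 0

open Filter

theorem iInf_measure_le_measure_limsup {α : Type*} [MeasurableSpace α] {μ : Measure α}
    [IsFiniteMeasure μ] {s : ℕ → Set α} (hs : ∀ n, MeasurableSet (s n)) :
    ⨅ n, μ (s n) ≤ μ (limsup s atTop) := by
  have htail : Antitone fun n => ⋃ i ≥ n, s i := fun m n hmn =>
    Set.biUnion_mono (fun i (hi : n ≤ i) => hmn.trans hi) fun _ _ => le_rfl
  rw [limsup_eq_iInf_iSup_of_nat]
  simp only [Set.iSup_eq_iUnion, Set.iInf_eq_iInter]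
  rw [htail.measure_iInter (fun n => (MeasurableSet.biUnion (Set.to_countable _)
    fun i _ => hs i).nullMeasurableSet) ⟨0, measure_ne_top _ _⟩]
  exact iInf_mono fun n => measure_mono (Set.subset_biUnion_of_mem (le_refl n))

section WeightedDirac

variable {ι α : Type*} [MeasurableSpace α] (w : ι → ℝ≥0∞) (x : ι → α)

theorem le_sum_smul_dirac_apply {s : Set α} {i : ι} (hi : x i ∈ s) :
    w i ≤ Measure.sum (fun i => w i • Measure.dirac (x i)) s :=
  calc w i = (w i • Measure.dirac (x i)) s := by
        rw [Measure.smul_apply, Measure.dirac_apply_of_mem hi, smul_eq_mul, mul_one]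
    _ ≤ _ := Measure.le_sum _ i s

theorem sum_smul_dirac_apply_eq_zero [Countable ι] [MeasurableSingletonClass α] {s : Set α}
    (hs : ∀ i, x i ∉ s) : Measure.sum (fun i => w i • Measure.dirac (x i)) s = 0 :=
  Measure.sum_apply_eq_zero.2 fun i => by
    rw [Measure.smul_apply, Measure.dirac_apply, Set.indicator_of_notMem (hs i), smul_zero]

theorem isFiniteMeasure_sum_smul_dirac (hw : ∑' i, w i ≠ ∞) :
    IsFiniteMeasure (Measure.sum fun i => w i • Measure.dirac (x i)) :=
  ⟨by simpa [Measure.sum_apply _ MeasurableSet.univ] using hw.lt_top⟩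

end WeightedDirac

theorem measurableSet_cyl (σ : List Bool) : MeasurableSet (cyl σ) := by
  have : cyl σ = ⋂ i : Fin σ.length, (fun Z : ℕ → Bool => Z i) ⁻¹' {σ.get i} := by
    ext Z; simp [cyl]
  rw [this]
  exact .iInter fun i => measurable_pi_apply _ (measurableSet_singleton _)

theorem measurableSet_testSet (f : ℕ → ℕ → Option (List Bool)) (m : ℕ) :
    MeasurableSet (testSet f m) :=
  .biUnion (Set.to_countable _) fun σ _ => measurableSet_cyl σ

def tailTest (f : ℕ → ℕ → Option (List Bool)) : ℕ → ℕ → Option (List Bool) :=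
  fun m i => f (m + 1 + (Nat.unpair i).1) (Nat.unpair i).2

theorem testSet_tailTest (f : ℕ → ℕ → Option (List Bool)) (m : ℕ) :
    testSet (tailTest f) m = ⋃ j, testSet f (m + 1 + j) := by
  ext Z
  simp only [testSet, tailTest, Set.mem_iUnion, Set.mem_ofPred_eq]
  constructor
  · rintro ⟨σ, ⟨i, hi⟩, hZ⟩
    exact ⟨(Nat.unpair i).1, σ, ⟨(Nat.unpair i).2, hi⟩, hZ⟩
  · rintro ⟨j, σ, ⟨i, hi⟩, hZ⟩
    exact ⟨σ, ⟨Nat.pair j i, by simpa only [Nat.unpair_pair] using hi⟩, hZ⟩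

theorem IsMLTest.tailTest {lam : Measure (ℕ → Bool)} {f : ℕ → ℕ → Option (List Bool)}
    (hf : IsMLTest lam f) : IsMLTest lam (tailTest f) := by
  refine ⟨hf.1.comp ?_ ?_, fun m => ?_⟩
  · exact (Primrec.nat_add.comp (Primrec.succ.comp .fst)
      (Primrec.fst.comp (Primrec.unpair.comp .snd))).to_comp
  · exact (Primrec.snd.comp (Primrec.unpair.comp .snd)).to_comp
  rw [testSet_tailTest]
  calc lam (⋃ j, testSet f (m + 1 + j))
      ≤ ∑' j, lam (testSet f (m + 1 + j)) := measure_iUnion_le _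
    _ ≤ ∑' j, (2⁻¹ : ℝ≥0∞) ^ (m + 1 + j) := ENNReal.tsum_le_tsum fun j => hf.2 _
    _ = 2⁻¹ ^ m * (2⁻¹ * ∑' j, (2⁻¹ : ℝ≥0∞) ^ j) := by
        simp only [pow_add, pow_one, ENNReal.tsum_mul_left, mul_assoc]
    _ = 2⁻¹ ^ m := by
        rw [ENNReal.tsum_geometric, ENNReal.one_sub_inv_two, inv_inv,
          ENNReal.inv_mul_cancel two_ne_zero ENNReal.ofNat_ne_top, mul_one]

theorem MLRandom.eventually_notMem_testSet {lam : Measure (ℕ → Bool)} {Z : ℕ → Bool}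
    (hZ : MLRandom lam Z) {f : ℕ → ℕ → Option (List Bool)} (hf : IsMLTest lam f) :
    ∀ᶠ m in atTop, Z ∉ testSet f m := by
  obtain ⟨M, hM⟩ := hZ _ hf.tailTest
  refine eventually_atTop.2 ⟨M + 1, fun m hm hZm => hM ?_⟩
  rw [testSet_tailTest]
  exact Set.mem_iUnion.2 ⟨m - (M + 1), by rwa [Nat.add_sub_cancel' hm]⟩

theorem MLAC.mlRandom_of_measure_singleton_pos {lam μ : Measure (ℕ → Bool)} (hμ : MLAC lam μ)
    {Z : ℕ → Bool} (hZ : 0 < μ {Z}) : MLRandom lam Z := by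
  intro f hf
  by_contra! hcap
  have : μ {Z} ≤ ⨅ m, μ (testSet f m) :=
    le_iInf fun m => measure_mono (Set.singleton_subset_iff.2 (hcap m))
  exact hZ.ne' (le_antisymm (hμ f hf ▸ this) bot_le)

theorem mlac_of_measure_not_mlRandom_eq_zero {lam μ : Measure (ℕ → Bool)} [IsFiniteMeasure μ]
    (hμ : μ {Z | ¬MLRandom lam Z} = 0) : MLAC lam μ := by
  intro f hf
  have hlimsup : limsup (testSet f) atTop ⊆ {Z | ¬MLRandom lam Z} := fun Z hZ hrand =>
    (mem_limsup_iff_frequently_mem.1 hZ) (hrand.eventually_notMem_testSet hf)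
  exact nonpos_iff_eq_zero.1 <| hμ ▸
    (iInf_measure_le_measure_limsup (measurableSet_testSet f)).trans (measure_mono hlimsup)

theorem stmt13_general (lam : Measure (ℕ → Bool))
    (Z : ℕ → (ℕ → Bool)) (c : ℕ → ℝ) (hc : ∀ k, 0 < c k) (hsum : ∑' k, c k = 1) :
    MLAC lam (Measure.sum fun k => ENNReal.ofReal (c k) • Measure.dirac (Z k)) ↔
      ∀ k, MLRandom lam (Z k) := by
  set w : ℕ → ℝ≥0∞ := fun k => ENNReal.ofReal (c k)
  have hw : ∑' k, w k = 1 := by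
    have hc_summable : Summable c := by
      by_contra h
      rw [tsum_eq_zero_of_not_summable h] at hsum
      exact zero_ne_one hsum
    rw [← ENNReal.ofReal_tsum_of_nonneg (fun k => (hc k).le) hc_summable, hsum,
      ENNReal.ofReal_one]
  have := isFiniteMeasure_sum_smul_dirac w Z (hw ▸ ENNReal.one_ne_top)
  constructor
  · intro hμ k
    exact hμ.mlRandom_of_measure_singleton_pos <|
      (ENNReal.ofReal_pos.2 (hc k)).trans_le (le_sum_smul_dirac_apply w Z rfl)
  · intro hZ
    exact mlac_of_measure_not_mlRandom_eq_zero <|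
      sum_smul_dirac_apply_eq_zero w Z fun k hk => hk (hZ k)

/-- If `c k > 0` with `∑ c k = 1`, then
`μ = ∑_k c_k · δ_{Z k}` is Martin-Löf absolutely continuous iff every `Z k`
is Martin-Löf random. -/
theorem stmt13 (lam : Measure (ℕ → Bool)) (hlam : IsFairCoin lam)
    (Z : ℕ → (ℕ → Bool)) (c : ℕ → ℝ) (hc : ∀ k, 0 < c k) (hsum : ∑' k, c k = 1) :
    MLAC lam (Measure.sum fun k => ENNReal.ofReal (c k) • Measure.dirac (Z k)) ↔
      ∀ k, MLRandom lam (Z k) :=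
  stmt13_general lam Z c hc hsum
end

section
/- Let μ be a Borel probability measure on Cantor space, let δ > 0 be real, let m, t ∈ ℕ, let M be a finite index set of cardinality 2^m, and for each k ∈ M let S_k be a union of cylinders [σ] over a set of strings σ of length t, with μ(S_k) > δ for every k ∈ M. Let G be the union of all cylinders [σ] over strings σ of length t such that the number of k ∈ M with [σ] ⊆ S_k is at least δ·2^(m−1). Then μ(G) > δ/2 and λ(G) ≤ (∑_{k ∈ M} λ(S_k)) / (δ·2^(m−1)), where λ is the fair-coin measure. -/
open MeasureTheory
open scoped ENNReal

/-- The cylinder of a string of length `t`, viewed as `σ : Fin t → Bool`. -/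
def cylF {t : ℕ} (σ : Fin t → Bool) : Set (ℕ → Bool) :=
  {Z | ∀ i : Fin t, Z i = σ i}

/-!
Both bounds come from double counting: writing `n σ` for the number of `k ∈ A` with
`[σ] ⊆ S k`, every measure `ν` satisfies `∑ k ∈ A, ν (S k) = ∑ σ, n σ * ν [σ]`.
For `λ` this is Markov's inequality for `n` at the threshold `c = δ 2 ^ (m - 1)`.
For `μ`, strings outside `G` have `n σ < c` and strings in `G` have `n σ ≤ 2 ^ m`, so
`2 ^ m δ < ∑ k ∈ A, μ (S k) ≤ 2 ^ m μ G + c`, i.e. `δ / 2 < μ G`.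
-/

open Finset Function

section Cylinders

variable {t : ℕ}

theorem measurableSet_cylF (σ : Fin t → Bool) : MeasurableSet (cylF σ) := by
  have h : cylF σ = ⋂ i : Fin t, (fun Z : ℕ → Bool => Z i) ⁻¹' {σ i} := by
    ext Z; simp [cylF]
  rw [h]
  exact .iInter fun i => measurable_pi_apply _ (.singleton _)

theorem cylF_nonempty (σ : Fin t → Bool) : (cylF σ).Nonempty :=
  ⟨fun n => if h : n < t then σ ⟨n, h⟩ else false, fun i => by simp [i.isLt]⟩

theorem eq_of_mem_cylF {σ τ : Fin t → Bool} {Z : ℕ → Bool} (hσ : Z ∈ cylF σ)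
    (hτ : Z ∈ cylF τ) : σ = τ :=
  funext fun i => (hσ i).symm.trans (hτ i)

theorem pairwise_disjoint_cylF : Pairwise (Disjoint on cylF (t := t)) :=
  fun _ _ h => Set.disjoint_left.2 fun _ hσ hτ => h (eq_of_mem_cylF hσ hτ)

theorem iUnion_cylF : ⋃ σ : Fin t → Bool, cylF σ = Set.univ :=
  Set.eq_univ_of_forall fun Z => Set.mem_iUnion.2 ⟨fun i => Z i, fun _ => rfl⟩

theorem cylF_subset_biUnion_cylF_iff {s : Set (Fin t → Bool)} {σ : Fin t → Bool} :
    cylF σ ⊆ ⋃ τ ∈ s, cylF τ ↔ σ ∈ s := by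
  refine ⟨fun h => ?_, fun h => Set.subset_biUnion_of_mem h⟩
  obtain ⟨Z, hZ⟩ := cylF_nonempty σ
  obtain ⟨τ, hτ, hZτ⟩ := Set.mem_iUnion₂.1 (h hZ)
  rwa [eq_of_mem_cylF hZ hZτ]

theorem measure_biUnion_cylF (ν : Measure (ℕ → Bool)) (s : Finset (Fin t → Bool)) :
    ν (⋃ σ ∈ s, cylF σ) = ∑ σ ∈ s, ν (cylF σ) :=
  measure_biUnion_finset (fun _ _ _ _ h => pairwise_disjoint_cylF h)
    fun σ _ => measurableSet_cylF σ

theorem sum_measure_cylF (ν : Measure (ℕ → Bool)) :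
    ∑ σ : Fin t → Bool, ν (cylF σ) = ν Set.univ := by
  rw [← measure_biUnion_cylF, ← iUnion_cylF (t := t)]
  simp

end Cylinders

section FiniteMarkov

variable {ι R : Type*} [CommSemiring R] [LinearOrder R] [IsOrderedRing R]
  [CanonicallyOrderedAdd R] (s : Finset ι) (f w : ι → R) (c : R)

theorem Finset.mul_sum_filter_le_sum_mul :
    c * ∑ i ∈ s with c ≤ f i, w i ≤ ∑ i ∈ s, f i * w i :=
  calc c * ∑ i ∈ s with c ≤ f i, w i = ∑ i ∈ s with c ≤ f i, c * w i := mul_sum ..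
    _ ≤ ∑ i ∈ s with c ≤ f i, f i * w i :=
      sum_le_sum fun _ hi => mul_le_mul_of_nonneg_right (mem_filter.1 hi).2 zero_le
    _ ≤ ∑ i ∈ s, f i * w i := sum_le_sum_of_subset (filter_subset _ _)

theorem Finset.sum_mul_le_mul_sum_filter_add_mul_sum {P : R} (hf : ∀ i ∈ s, f i ≤ P) :
    ∑ i ∈ s, f i * w i ≤ P * ∑ i ∈ s with c ≤ f i, w i + c * ∑ i ∈ s, w i := by
  rw [← sum_filter_add_sum_filter_not s (fun i => c ≤ f i), mul_sum, mul_sum]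
  gcongr ?_ + ?_
  · exact sum_le_sum fun i hi => mul_le_mul_of_nonneg_right (hf i (mem_filter.1 hi).1) zero_le
  · calc ∑ i ∈ s with ¬c ≤ f i, f i * w i ≤ ∑ i ∈ s with ¬c ≤ f i, c * w i :=
          sum_le_sum fun i hi =>
            mul_le_mul_of_nonneg_right (not_le.1 (mem_filter.1 hi).2).le zero_le
      _ ≤ ∑ i ∈ s, c * w i := sum_le_sum_of_subset (filter_subset _ _)

end FiniteMarkov

section Counting

variable {ι : Type*} {t : ℕ} (A : Finset ι) (strs : ι → Set (Fin t → Bool))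

open Classical in
noncomputable def coverCount (σ : Fin t → Bool) : ℕ :=
  #{k ∈ A | σ ∈ strs k}

theorem ncard_setOf_mem_eq_coverCount (σ : Fin t → Bool) :
    {k ∈ (A : Set ι) | σ ∈ strs k}.ncard = coverCount A strs σ := by
  classical
  rw [coverCount, ← Set.ncard_coe_finset]
  congr 1
  ext k
  simp

open Classical in
theorem coverCount_le_card (σ : Fin t → Bool) : coverCount A strs σ ≤ #A :=
  card_filter_le _ _

theorem sum_measure_biUnion_cylF (ν : Measure (ℕ → Bool)) :
    ∑ k ∈ A, ν (⋃ σ ∈ strs k, cylF σ) = ∑ σ, coverCount A strs σ * ν (cylF σ) := by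
  classical
  calc ∑ k ∈ A, ν (⋃ σ ∈ strs k, cylF σ)
      = ∑ k ∈ A, ∑ σ, if σ ∈ strs k then ν (cylF σ) else 0 := by
        refine sum_congr rfl fun k _ => ?_
        rw [← sum_filter, ← measure_biUnion_cylF]
        simp
    _ = ∑ σ, ∑ k ∈ A, if σ ∈ strs k then ν (cylF σ) else 0 := sum_comm
    _ = ∑ σ, coverCount A strs σ * ν (cylF σ) := by
        refine sum_congr rfl fun σ _ => ?_
        rw [← sum_filter, sum_const, nsmul_eq_mul, coverCount]

open Classical in
noncomputable def heavyStrings (c : ℝ≥0∞) : Finset (Fin t → Bool) :=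
  {σ | c ≤ coverCount A strs σ}

theorem coe_heavyStrings_ofReal (c : ℝ) :
    (heavyStrings A strs (ENNReal.ofReal c) : Set (Fin t → Bool))
      = {σ | c ≤ coverCount A strs σ} := by
  ext σ
  simp [heavyStrings, ENNReal.ofReal_le_natCast]

theorem mul_measure_heavyStrings_le (ν : Measure (ℕ → Bool)) (c : ℝ≥0∞) :
    c * ν (⋃ σ ∈ heavyStrings A strs c, cylF σ) ≤ ∑ k ∈ A, ν (⋃ σ ∈ strs k, cylF σ) := by
  rw [measure_biUnion_cylF, sum_measure_biUnion_cylF]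
  exact mul_sum_filter_le_sum_mul _ _ _ _

theorem sum_measure_le_card_mul_measure_heavyStrings_add (ν : Measure (ℕ → Bool))
    (c : ℝ≥0∞) :
    ∑ k ∈ A, ν (⋃ σ ∈ strs k, cylF σ)
      ≤ #A * ν (⋃ σ ∈ heavyStrings A strs c, cylF σ) + c * ν Set.univ := by
  rw [measure_biUnion_cylF, sum_measure_biUnion_cylF, ← sum_measure_cylF]
  exact sum_mul_le_mul_sum_filter_add_mul_sum _ _ _ _
    fun σ _ => Nat.cast_le.2 (coverCount_le_card A strs σ)

end Counting

theorem stmt16_general (lam μ : Measure (ℕ → Bool))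
    [IsProbabilityMeasure μ]
    (δ : ℝ) (hδ : 0 < δ) (m t : ℕ) (A : Finset ℕ) (hA : A.card = 2 ^ m)
    (strs : ℕ → Set (Fin t → Bool)) (S : ℕ → Set (ℕ → Bool))
    (hS : ∀ k, S k = ⋃ σ ∈ strs k, cylF σ)
    (hμS : ∀ k ∈ A, ENNReal.ofReal δ < μ (S k))
    (G : Set (ℕ → Bool))
    (hG : G = ⋃ σ ∈ {σ : Fin t → Bool |
        δ * (2 : ℝ) ^ ((m : ℤ) - 1) ≤ {k ∈ (A : Set ℕ) | cylF σ ⊆ S k}.ncard},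
      cylF σ) :
    ENNReal.ofReal (δ / 2) < μ G ∧
      lam G ≤ (∑ k ∈ A, lam (S k)) / ENNReal.ofReal (δ * (2 : ℝ) ^ ((m : ℤ) - 1)) := by
  obtain rfl : S = fun k => ⋃ σ ∈ strs k, cylF σ := funext hS
  have hc : δ * (2 : ℝ) ^ ((m : ℤ) - 1) = 2 ^ m * (δ / 2) := by
    rw [zpow_sub₀ two_ne_zero, zpow_one, zpow_natCast]; ring
  set a := ENNReal.ofReal (δ / 2)
  have hca : ENNReal.ofReal (2 ^ m * (δ / 2)) = 2 ^ m * a := by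
    rw [ENNReal.ofReal_mul (by positivity), ENNReal.ofReal_pow zero_le_two,
      ENNReal.ofReal_ofNat]
  simp_rw [hc, cylF_subset_biUnion_cylF_iff, ncard_setOf_mem_eq_coverCount,
    ← coe_heavyStrings_ofReal, Finset.set_biUnion_coe, hca] at hG ⊢
  refine ⟨?_, ?_⟩
  · have hlt : 2 ^ m * (a + a) < 2 ^ m * (μ G + a) :=
      calc 2 ^ m * (a + a) = ∑ k ∈ A, ENNReal.ofReal δ := by
            rw [sum_const, hA, nsmul_eq_mul, Nat.cast_pow, Nat.cast_ofNat,
              ← ENNReal.ofReal_add (by positivity) (by positivity), add_halves]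
        _ < ∑ k ∈ A, μ (⋃ σ ∈ strs k, cylF σ) :=
            ENNReal.sum_lt_sum_of_nonempty (card_pos.1 (by rw [hA]; positivity)) hμS
        _ ≤ #A * μ G + 2 ^ m * a * μ Set.univ := by
            rw [hG]; exact sum_measure_le_card_mul_measure_heavyStrings_add A strs μ _
        _ = 2 ^ m * (μ G + a) := by rw [hA, measure_univ]; push_cast; ring
    have hfin : (2 : ℝ≥0∞) ^ m ≠ ⊤ := ENNReal.pow_ne_top ENNReal.ofNat_ne_top
    exact (ENNReal.add_lt_add_iff_right ENNReal.ofReal_ne_top).1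
      ((ENNReal.mul_lt_mul_iff_right (by positivity) hfin).1 hlt)
  · have hpos : 2 ^ m * a ≠ 0 := by positivity
    rw [ENNReal.le_div_iff_mul_le (.inl hpos) (.inl (by finiteness)), mul_comm, hG]
    exact mul_measure_heavyStrings_le A strs lam _

/-- Let `μ` be a Borel probability measure on Cantor space,
`δ > 0`, `A` an index set of cardinality `2 ^ m`, and for `k ∈ A` let `S k`
be a union of cylinders of length-`t` strings with `μ (S k) > δ`.  Let `G`
be the union of the cylinders of length-`t` strings `σ` such that
`[σ] ⊆ S k` for at least `δ · 2 ^ (m - 1)` many `k ∈ A`.  Then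
`μ (G) > δ / 2` and `λ (G) ≤ (∑_{k ∈ A} λ (S k)) / (δ · 2 ^ (m - 1))`. -/
theorem stmt16 (lam μ : Measure (ℕ → Bool)) (hlam : IsFairCoin lam)
    [IsProbabilityMeasure μ]
    (δ : ℝ) (hδ : 0 < δ) (m t : ℕ) (A : Finset ℕ) (hA : A.card = 2 ^ m)
    (strs : ℕ → Set (Fin t → Bool)) (S : ℕ → Set (ℕ → Bool))
    (hS : ∀ k, S k = ⋃ σ ∈ strs k, cylF σ)
    (hμS : ∀ k ∈ A, ENNReal.ofReal δ < μ (S k))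
    (G : Set (ℕ → Bool))
    (hG : G = ⋃ σ ∈ {σ : Fin t → Bool |
        δ * (2 : ℝ) ^ ((m : ℤ) - 1) ≤ {k ∈ (A : Set ℕ) | cylF σ ⊆ S k}.ncard},
      cylF σ) :
    ENNReal.ofReal (δ / 2) < μ G ∧
      lam G ≤ (∑ k ∈ A, lam (S k)) / ENNReal.ofReal (δ * (2 : ℝ) ^ ((m : ℤ) - 1)) :=
  stmt16_general lam μ δ hδ m t A hA strs S hS hμS G hG
end
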